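/- Let u, v ∈ ℕ and let A be a u × v matrix with rational entries such that for each a ∈ ℤ there exists x⃗ ∈ ℤ^v with A x⃗ = (a, ..., a) ∈ ℤ^u. If B ⊆ ℤ is a CR-set, then {y⃗ ∈ ℤ^v : A y⃗ ∈ B^u} is a CR-set in ℤ^v. -/

import Mathlib

/-!
`A` takes integer values on a finite-index subgroup `L` of `ℤ^v`: it contains `c ℤ^v` for a
common denominator `c` of the entries. Given at most `k` sequences in `ℤ^v`, pigeonhole on their
partial sums modulo `L` finds in every window `(m N, (m + 1) N]`, with `N = [ℤ^v : L]^k`, one block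
on which all their sums lie in `L`. Applying `A` to these block sums gives at most `k u` integer
sequences, to which the CR property of `B` applies; the union of the chosen blocks, shifted by a
preimage of the constant vector, is then a witness in `ℤ^v`.
-/

/-- `A` is a CR-set: for each `k` there is `r` such that every set of at most `k`
sequences has a sum-witness inside `{1,…,r}` landing in `A`. -/
def CRSet {S : Type*} [AddCommMonoid S] (A : Set S) : Prop :=
  ∀ k : ℕ, ∃ r : ℕ, ∀ F : Finset (ℕ → S), F.card ≤ k →
    ∃ (a : S) (H : Finset ℕ), H.Nonempty ∧ H ⊆ Finset.Icc 1 r ∧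
      ∀ f ∈ F, a + ∑ t ∈ H, f t ∈ A

open Finset Function

theorem Rat.exists_pos_nat_mul_eq_intCast {ι : Type*} [Fintype ι] (q : ι → ℚ) :
    ∃ c : ℕ, 0 < c ∧ ∀ i, ∃ z : ℤ, c * q i = z := by
  refine ⟨∏ i, (q i).den, prod_pos fun i _ => (q i).pos, fun i => ?_⟩
  obtain ⟨d, hd⟩ := dvd_prod_of_mem (fun i => (q i).den) (mem_univ i)
  exact ⟨d * (q i).num, by rw [hd]; push_cast; rw [← Rat.mul_den_eq_num]; ring⟩

theorem Finset.pairwise_disjoint_of_subset_Ioc_mul {I : ℕ → Finset ℕ} {N : ℕ}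
    (hI : ∀ m, I m ⊆ Ioc (m * N) ((m + 1) * N)) : Pairwise (Disjoint on I) := by
  intro m m' hne
  have hmono : Monotone (· * N) := fun _ _ h => Nat.mul_le_mul_right N h
  rw [onFun, ← disjoint_coe]
  refine (hmono.pairwise_disjoint_on_Ioc_succ hne).mono ?_ ?_ <;>
    simpa [← coe_Ioc, Order.succ_eq_add_one] using hI _

theorem Finset.biUnion_subset_Icc_of_subset_Ioc_mul {H : Finset ℕ} {I : ℕ → Finset ℕ} {r N : ℕ}
    (hH : H ⊆ Icc 1 r) (hI : ∀ m, I m ⊆ Ioc (m * N) ((m + 1) * N)) :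
    H.biUnion I ⊆ Icc 1 ((r + 1) * N) := by
  intro t ht
  obtain ⟨m, hm, htm⟩ := mem_biUnion.mp ht
  have hmr := (mem_Icc.mp (hH hm)).2
  have := mem_Ioc.mp (hI m htm)
  exact mem_Icc.mpr ⟨by omega, this.2.trans (Nat.mul_le_mul_right N (by omega))⟩

theorem AddSubgroup.exists_sum_Ioc_mem {G : Type*} [AddCommGroup G] (L : AddSubgroup G)
    [L.FiniteIndex] (F : Finset (ℕ → G)) {m n : ℕ} (hmn : m + L.index ^ F.card ≤ n) :
    ∃ t₁ t₂, m ≤ t₁ ∧ t₁ < t₂ ∧ t₂ ≤ n ∧ ∀ f ∈ F, ∑ s ∈ Ioc t₁ t₂, f s ∈ L := by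
  classical
  have : Fintype (G ⧸ L) := Fintype.ofFinite _
  let Φ : ℕ → F → G ⧸ L := fun t f => QuotientAddGroup.mk (∑ s ∈ Ioc 0 t, f.1 s)
  have hmem : ∀ t₁ t₂, t₁ ≤ t₂ → Φ t₁ = Φ t₂ → ∀ f ∈ F, ∑ s ∈ Ioc t₁ t₂, f s ∈ L := by
    intro t₁ t₂ hle hΦ f hf
    have hsplit := sum_Ioc_consecutive f (Nat.zero_le t₁) hle
    have := QuotientAddGroup.eq.mp (congrFun hΦ ⟨f, hf⟩)
    rwa [← hsplit, neg_add_cancel_left] at this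
  have hcard : Fintype.card (F → G ⧸ L) < #(Icc m n) := by
    rw [Fintype.card_fun, Fintype.card_coe, Nat.card_Icc, ← Nat.card_eq_fintype_card,
      ← AddSubgroup.index_eq_card]
    omega
  obtain ⟨t, ht, t', ht', hne, hΦ⟩ :=
    exists_ne_map_eq_of_card_lt_of_maps_to hcard (fun t _ => mem_univ (Φ t))
  rw [mem_Icc] at ht ht'
  rcases hne.lt_or_gt with hlt | hlt
  · exact ⟨t, t', ht.1, hlt, ht'.2, hmem t t' hlt.le hΦ⟩
  · exact ⟨t', t, ht'.1, hlt, ht.2, hmem t' t hlt.le hΦ.symm⟩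

theorem CRSet.setOf_forall_exists_mem_eq_of_finiteIndex {G T Q ι : Type*} [AddCommGroup G]
    [AddCommMonoid T] [AddCommMonoid Q] [Fintype ι] (φ : G →+ ι → Q) (e : T →+ Q)
    (L : AddSubgroup G) [L.FiniteIndex] (hL : ∀ y ∈ L, ∀ i, ∃ t, φ y i = e t)
    (hconst : ∀ a, ∃ x, ∀ i, φ x i = e a) {B : Set T} (hB : CRSet B) :
    CRSet {y | ∀ i, ∃ b ∈ B, φ y i = e b} := by
  classical
  intro k
  obtain ⟨r, hr⟩ := hB (k * Fintype.card ι)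
  set N := L.index ^ k
  refine ⟨(r + 1) * N, fun F hF => ?_⟩
  have hblocks : ∀ m, ∃ I : Finset ℕ, I.Nonempty ∧ I ⊆ Ioc (m * N) ((m + 1) * N) ∧
      ∀ f ∈ F, ∑ s ∈ I, f s ∈ L := by
    intro m
    have hle : m * N + L.index ^ F.card ≤ (m + 1) * N := by
      rw [add_mul, one_mul, add_le_add_iff_left]
      exact Nat.pow_le_pow_right (Nat.pos_of_ne_zero L.index_ne_zero_of_finite) hF
    obtain ⟨t₁, t₂, ht₁, hlt, ht₂, hmem⟩ := L.exists_sum_Ioc_mem F hle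
    exact ⟨Ioc t₁ t₂, nonempty_Ioc.mpr hlt, Ioc_subset_Ioc ht₁ ht₂, hmem⟩
  choose I hIne hIsub hIL using hblocks
  have hint : ∀ f i m, ∃ t, f ∈ F → φ (∑ s ∈ I m, f s) i = e t := fun f i m =>
    if hf : f ∈ F then (hL _ (hIL m f hf) i).imp fun _ h _ => h else ⟨0, fun h => (hf h).elim⟩
  choose h hh using hint
  obtain ⟨a, H, hHne, hHsub, hHB⟩ :=
    hr ((F ×ˢ univ).image fun p => h p.1 p.2) (card_image_le.trans (by
      rw [card_product, card_univ]; exact Nat.mul_le_mul_right _ hF))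
  obtain ⟨x, hx⟩ := hconst a
  refine ⟨x, H.biUnion I, hHne.biUnion fun m _ => hIne m,
    biUnion_subset_Icc_of_subset_Ioc_mul hHsub hIsub, fun f hf i => ?_⟩
  refine ⟨a + ∑ m ∈ H, h f i m,
    hHB _ (mem_image.mpr ⟨(f, i), mem_product.mpr ⟨hf, mem_univ i⟩, rfl⟩), ?_⟩
  rw [sum_biUnion ((pairwise_disjoint_of_subset_Ioc_mul hIsub).set_pairwise _), map_add,
    map_sum, Pi.add_apply, hx, Finset.sum_apply, map_add, map_sum]
  exact congrArg _ (sum_congr rfl fun m _ => hh f i m hf)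

theorem Matrix.exists_mulVec_intCast_eq_intCast_of_dvd {m n : Type*} [Fintype n]
    (A : Matrix m n ℚ) {c : ℕ} (hA : ∀ i j, ∃ z : ℤ, c * A i j = z) {y : n → ℤ}
    (hy : ∀ j, (c : ℤ) ∣ y j) (i : m) : ∃ t : ℤ, A.mulVec (fun j => (y j : ℚ)) i = t := by
  choose M hM using hA
  choose w hw using hy
  refine ⟨∑ j, M i j * w j, ?_⟩
  simp only [mulVec, dotProduct, hw]
  push_cast
  exact sum_congr rfl fun j _ => by rw [← hM]; ring

/-- if a `u × v` rational matrix `A` hits every constant integer vector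
and `B ⊆ ℤ` is a CR-set, then `{y ∈ ℤ^v : A y ∈ B^u}` is a CR-set in `ℤ^v`. -/
theorem stmt9 (u v : ℕ) (A : Matrix (Fin u) (Fin v) ℚ)
    (hA : ∀ a : ℤ, ∃ x : Fin v → ℤ,
      ∀ i : Fin u, A.mulVec (fun j => (x j : ℚ)) i = (a : ℚ))
    (B : Set ℤ) (hB : CRSet B) :
    CRSet {y : Fin v → ℤ |
      ∀ i : Fin u, ∃ b ∈ B, A.mulVec (fun j => (y j : ℚ)) i = (b : ℚ)} := by
  obtain ⟨c, hc, hcA⟩ := Rat.exists_pos_nat_mul_eq_intCast fun p : Fin u × Fin v => A p.1 p.2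
  have : NeZero c := ⟨hc.ne'⟩
  let φ : (Fin v → ℤ) →+ Fin u → ℚ :=
    A.mulVecLin.toAddMonoidHom.comp (AddMonoidHom.compLeft (Int.castAddHom ℚ) (Fin v))
  let reduce := AddMonoidHom.compLeft (Int.castAddHom (ZMod c)) (Fin v)
  refine CRSet.setOf_forall_exists_mem_eq_of_finiteIndex φ (Int.castAddHom ℚ) reduce.ker
    (fun y hy i => ?_) hA hB
  exact A.exists_mulVec_intCast_eq_intCast_of_dvd (fun i j => hcA (i, j))
    (fun j => (ZMod.intCast_zmod_eq_zero_iff_dvd _ _).mp (congrFun hy j)) i
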